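/- Fix integers M ≥ N ≥ 1, parameters t, α₁,…,α_M, γ₁,…,γ_M ∈ ℂ with t ≠ 0, an element s ∈ ℂ with s² = −t, and integers 1 ≤ x̄₁ < ⋯ < x̄_N = M. For nonzero z₁,…,z_N ∈ ℂ with t²z_j² ≠ 1 for all j, t²z_jz_k ≠ 1 and z_j ≠ z_k for all j < k, and fixed w₁,…,w_N ∈ ℂ with w_j² = z_j, define F̄^{II}_{M,N}(z₁,…,z_N; γ₁,…,γ_M; x̄₁,…,x̄_N) = [ t^{N(M-N)+N(N+1)/2} ∏_{j=1}^{N} w_j(1−s z_j) ∏_{1≤j<k≤N}(1+tz_jz_k)(1+tz_j^{-1}z_k) ] / [ (−1)^N ∏_{j=1}^{N}(1−t²z_j²) ∏_{1≤j<k≤N}(1−t²z_jz_k)(1−z_j^{-1}z_k) ] × Σ_{σ ∈ S_N} Σ_{τ ∈ {±1}^N} sgn(σ) (−1)^{#{j : τ_j = −1}} ∏_{j=1}^{N} ( (t z_{σ(j)})^{τ_{σ(j)}} − s ) · ∏_{j=1}^{N} [ ∏_{k=1}^{x̄_j-1}(−α_k + (1-α_kγ_k)(t z_{σ(j)})^{τ_{σ(j)}})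 ] [ ∏_{k=x̄_j+1}^{M}(1 + γ_k (t z_{σ(j)})^{τ_{σ(j)}}) ] [ ∏_{k=1}^{M}(1 + γ_k (t z_{σ(j)})^{-τ_{σ(j)}}) ]. Then, with γ_M specialized to γ_M = −(t z_N)^{-1}, F̄^{II}_{M,N}(z₁,…,z_N; γ₁,…,γ_{M-1}, −(t z_N)^{-1}; x̄₁,…,x̄_N) = −s w_N · ∏_{j=1}^{N}(1 + (t z_N z_j)^{-1}) · ∏_{j=1}^{N-1}(1 + z_j (t z_N)^{-1}) · ∏_{j=1}^{M-1}(t(1-α_jγ_j) z_N − α_j) · ∏_{j=1}^{M-1}(t + γ_j z_N^{-1}) · F̄^{II}_{M-1,N-1}(z₁,…,z_{N-1}; γ₁,…,γ_{M-1}; x̄₁,…,x̄_{N-1}), where F̄^{II}_{M-1,0} is interpreted as 1. -/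

import Mathlib

/-!
Summing over the sign choices `τ` first, the explicit formula becomes the dual prefactor times
the determinant of the matrix whose `(i, j)` entry is `∑_{ε = ±1} ε ((t zᵢ)^ε - s) W(x̄ⱼ, (t zᵢ)^ε)`,
where `W(p, u)` is the `p`-th row weight of the Whittaker function.  The specialization
`γ_M = -(t z_N)⁻¹` kills the factor `1 + γ_M t z_N`: it sits in `W(p, t z_N)` for every `p < M`
and in the `u⁻¹`-product of `W(p, (t z_N)⁻¹)` for every `p`.  Hence the row of `z_N` vanishes
except at the column of `x̄_N = M`, and Laplace expansion along it leaves a minor whose rows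
carry the extra factor `(1 + γ_M u)(1 + γ_M u⁻¹)`; being symmetric in `u ↔ u⁻¹`, it does not
depend on the sign choice and factors out of the determinant.  What remains is an identity
between the prefactors, checked one pair of variables `(z_j, z_N)` at a time.
-/

open Finset

/-- The reindexed explicit sum formula `F̄^{II}_{M,N}` (equation (127) in the Appendix of
the paper): the product of the type II dual prefactor and the generalized
Bump–Friedberg–Hoffstein Whittaker function `o^-_{λ̄}(tz₁,…,tz_N | −α | −γ | t)` with
`λ̄_j = x̄_{N-j+1} - N + j - 1`.  Here `s` plays the role of `√(-t)` and `w j` that of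
`z_j^{1/2}`.  Variables `z`, square roots `w` and hole positions `x̄` are 0-indexed;
parameter families `α, γ` are functions on `ℕ` (indices `1,…,M` are used).  The sign
choice `τ` is encoded by booleans: `τ j = true` stands for `τ_j = +1`, `τ j = false`
for `τ_j = -1`. -/
noncomputable def FIIbar (M : ℕ) (t s : ℂ) (α γ : ℕ → ℂ) {N : ℕ} (x : Fin N → ℕ)
    (z w : Fin N → ℂ) : ℂ :=
  (t ^ (N * (M - N) + N * (N + 1) / 2) * (∏ j, w j * (1 - s * z j)) *
      ∏ j, ∏ k ∈ Ioi j, (1 + t * z j * z k) * (1 + t * (z j)⁻¹ * z k)) /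
  ((-1 : ℂ) ^ N * (∏ j, (1 - t ^ 2 * z j ^ 2)) *
      ∏ j, ∏ k ∈ Ioi j, (1 - t ^ 2 * z j * z k) * (1 - (z j)⁻¹ * z k)) *
  ∑ σ : Equiv.Perm (Fin N), ∑ τ : Fin N → Bool,
    ((Equiv.Perm.sign σ : ℤ) : ℂ) *
    (-1 : ℂ) ^ (Finset.univ.filter (fun j => τ j = false)).card *
    (∏ j, ((if τ (σ j) then t * z (σ j) else (t * z (σ j))⁻¹) - s)) *
    ∏ j,
      ((∏ k ∈ Finset.Icc 1 (x j - 1),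
          (-α k + (1 - α k * γ k) * (if τ (σ j) then t * z (σ j) else (t * z (σ j))⁻¹))) *
       (∏ k ∈ Finset.Icc (x j + 1) M,
          (1 + γ k * (if τ (σ j) then t * z (σ j) else (t * z (σ j))⁻¹))) *
       (∏ k ∈ Finset.Icc 1 M,
          (1 + γ k * (if τ (σ j) then (t * z (σ j))⁻¹ else t * z (σ j)))))


theorem Matrix.det_of_sum_eq_sum_perm_sum_pi {R ι β : Type*} [CommRing R] [Fintype ι]
    [DecidableEq ι] [Fintype β] (F : ι → ι → β → R) :
    (Matrix.of fun i j => ∑ b, F i j b).det =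
      ∑ σ : Equiv.Perm ι, ∑ τ : ι → β,
        ((Equiv.Perm.sign σ : ℤ) : R) * ∏ j, F (σ j) j (τ (σ j)) := by
  rw [Matrix.det_apply']
  refine sum_congr rfl fun σ _ => ?_
  rw [← mul_sum]
  simp only [Matrix.of_apply, Fintype.prod_sum]
  congr 1
  exact (Equiv.sum_comp (σ.symm.arrowCongr (Equiv.refl β)) _).symm

theorem Matrix.det_succ_of_last_row_eq_zero {R : Type*} [CommRing R] {n : ℕ}
    (A : Matrix (Fin (n + 1)) (Fin (n + 1)) R)
    (h : ∀ j : Fin n, A (Fin.last n) j.castSucc = 0) :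
    A.det = A (Fin.last n) (Fin.last n) * (A.submatrix Fin.castSucc Fin.castSucc).det := by
  rw [Matrix.det_succ_row A (Fin.last n), Fin.sum_univ_castSucc]
  simp [h, ← two_mul, pow_mul]

theorem Fin.prod_Ioi_castSucc {M : Type*} [CommMonoid M] {n : ℕ} (g : Fin (n + 1) → M)
    (j : Fin n) :
    ∏ k ∈ Ioi j.castSucc, g k = (∏ k ∈ Ioi j, g k.castSucc) * g (Fin.last n) := by
  rw [← Ioc_top, Fin.top_eq_last, ← Ioo_insert_right (Fin.castSucc_lt_last j),
    prod_insert (by simp), ← Fin.finsetImage_castSucc_Ioi,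
    prod_image fun a _ b _ h => Fin.castSucc_injective n h, mul_comm]

theorem Fin.prod_prod_Ioi_castSucc {M : Type*} [CommMonoid M] {n : ℕ}
    (f : Fin (n + 1) → Fin (n + 1) → M) :
    ∏ j, ∏ k ∈ Ioi j, f j k =
      (∏ j : Fin n, ∏ k ∈ Ioi j, f j.castSucc k.castSucc) *
        ∏ j : Fin n, f j.castSucc (Fin.last n) := by
  rw [Fin.prod_univ_castSucc, ← Fin.top_eq_last, Ioi_top, prod_empty, Fin.top_eq_last, mul_one,
    ← prod_mul_distrib]
  exact prod_congr rfl fun j _ => Fin.prod_Ioi_castSucc (f j.castSucc) j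

section

variable {K : Type*} [Field K]

def signPow (b : Bool) (v : K) : K := if b then v else v⁻¹

def rowWeight (M : ℕ) (α γ : ℕ → K) (p : ℕ) (u : K) : K :=
  (∏ k ∈ Icc 1 (p - 1), (-α k + (1 - α k * γ k) * u)) *
    (∏ k ∈ Icc (p + 1) M, (1 + γ k * u)) * ∏ k ∈ Icc 1 M, (1 + γ k * u⁻¹)

def dualPrefactor (M : ℕ) (t s : K) {N : ℕ} (z w : Fin N → K) : K :=
  (t ^ (N * (M - N) + N * (N + 1) / 2) * (∏ j, w j * (1 - s * z j)) *
      ∏ j, ∏ k ∈ Ioi j, (1 + t * z j * z k) * (1 + t * (z j)⁻¹ * z k)) /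
  ((-1 : K) ^ N * (∏ j, (1 - t ^ 2 * z j ^ 2)) *
      ∏ j, ∏ k ∈ Ioi j, (1 - t ^ 2 * z j * z k) * (1 - (z j)⁻¹ * z k))

def dualMatrix (M : ℕ) (t s : K) (α γ : ℕ → K) {N : ℕ} (x : Fin N → ℕ) (z : Fin N → K) :
    Matrix (Fin N) (Fin N) K :=
  Matrix.of fun i j => ∑ b : Bool, (if b then 1 else -1) *
    ((signPow b (t * z i) - s) * rowWeight M α γ (x j) (signPow b (t * z i)))

theorem prod_Icc_update_succ_of_le {a b M : ℕ} (hb : b ≤ M) (γ : ℕ → K) (c : K)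
    (f : ℕ → K → K) :
    ∏ k ∈ Icc a b, f k (Function.update γ (M + 1) c k) = ∏ k ∈ Icc a b, f k (γ k) :=
  prod_congr rfl fun k hk => by
    rw [Function.update_of_ne (by linarith [(mem_Icc.mp hk).2])]

theorem rowWeight_succ_update {M p : ℕ} (hp : p ≤ M) (α γ : ℕ → K) (c u : K) :
    rowWeight (M + 1) α (Function.update γ (M + 1) c) p u =
      rowWeight M α γ p u * ((1 + c * u) * (1 + c * u⁻¹)) := by
  simp only [rowWeight, prod_Icc_succ_top (by omega : p + 1 ≤ M + 1),
    prod_Icc_succ_top (by omega : 1 ≤ M + 1), Function.update_self]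
  rw [prod_Icc_update_succ_of_le (by omega) γ c fun k g => -α k + (1 - α k * g) * u,
    prod_Icc_update_succ_of_le le_rfl γ c fun _ g => 1 + g * u,
    prod_Icc_update_succ_of_le le_rfl γ c fun _ g => 1 + g * u⁻¹]
  ring

theorem rowWeight_succ_update_self (M : ℕ) (α γ : ℕ → K) (c u : K) :
    rowWeight (M + 1) α (Function.update γ (M + 1) c) (M + 1) u =
      (∏ k ∈ Icc 1 M, (-α k + (1 - α k * γ k) * u)) *
        (∏ k ∈ Icc 1 M, (1 + γ k * u⁻¹)) * (1 + c * u⁻¹) := by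
  rw [rowWeight, Nat.add_sub_cancel, Icc_eq_empty (by omega : ¬M + 1 + 1 ≤ M + 1), prod_empty,
    mul_one, prod_Icc_succ_top (by omega : 1 ≤ M + 1), Function.update_self,
    prod_Icc_update_succ_of_le le_rfl γ c fun k g => -α k + (1 - α k * g) * u,
    prod_Icc_update_succ_of_le le_rfl γ c fun _ g => 1 + g * u⁻¹, mul_assoc]

theorem det_dualMatrix_succ_update {m n : ℕ} (t s : K) (α γ : ℕ → K) (x : Fin (n + 1) → ℕ)
    (z : Fin (n + 1) → K) (c : K) (hc : 1 + c * (t * z (Fin.last n)) = 0)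
    (hx : ∀ j : Fin n, x j.castSucc ≤ m) (hxM : x (Fin.last n) = m + 1) :
    (dualMatrix (m + 1) t s α (Function.update γ (m + 1) c) x z).det =
      (t * z (Fin.last n) - s) *
        ((∏ k ∈ Icc 1 m, (-α k + (1 - α k * γ k) * (t * z (Fin.last n)))) *
          (∏ k ∈ Icc 1 m, (1 + γ k * (t * z (Fin.last n))⁻¹)) *
          (1 + c * (t * z (Fin.last n))⁻¹)) *
        ((∏ i : Fin n, (1 + c * (t * z i.castSucc)) * (1 + c * (t * z i.castSucc)⁻¹)) *
          (dualMatrix m t s α γ (fun j => x j.castSucc) (fun j => z j.castSucc)).det) := by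
  rw [Matrix.det_succ_of_last_row_eq_zero]
  · congr 1
    · simp [dualMatrix, signPow, hxM, rowWeight_succ_update_self, hc]
    · rw [← Matrix.det_mul_column]
      congr 1
      ext i j
      simp only [dualMatrix, Matrix.submatrix_apply, Matrix.of_apply,
        rowWeight_succ_update (hx j), Fintype.sum_bool, signPow, ↓reduceIte, mul_inv_rev,
        one_mul, Bool.false_eq_true, inv_inv, neg_mul]
      ring
  · intro j
    simp [dualMatrix, signPow, rowWeight_succ_update (hx j), hc]

theorem dualPrefactor_succ {m n : ℕ} (hmn : n ≤ m) (t s : K) (z w : Fin (n + 1) → K) :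
    dualPrefactor (m + 1) t s z w =
      dualPrefactor m t s (fun j => z j.castSucc) (fun j => w j.castSucc) *
        ((t ^ (m + 1) * (w (Fin.last n) * (1 - s * z (Fin.last n))) *
            ∏ j : Fin n, (1 + t * z j.castSucc * z (Fin.last n)) *
              (1 + t * (z j.castSucc)⁻¹ * z (Fin.last n))) /
          (-(1 - t ^ 2 * z (Fin.last n) ^ 2) *
            ∏ j : Fin n, (1 - t ^ 2 * z j.castSucc * z (Fin.last n)) *
              (1 - (z j.castSucc)⁻¹ * z (Fin.last n)))) := by
  have hexp : (n + 1) * (m + 1 - (n + 1)) + (n + 1) * (n + 1 + 1) / 2 =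
      n * (m - n) + n * (n + 1) / 2 + (m + 1) := by
    have h1 : m + 1 - (n + 1) = m - n := by omega
    have h2 : (n + 1) * (n + 1 + 1) = n * (n + 1) + 2 * (n + 1) := by ring
    have h3 : (n + 1) * (m - n) = n * (m - n) + (m - n) := by ring
    rw [h1]
    omega
  rw [dualPrefactor, dualPrefactor, hexp, pow_add, pow_succ (-1 : K),
    Fin.prod_prod_Ioi_castSucc fun j k => (1 + t * z j * z k) * (1 + t * (z j)⁻¹ * z k),
    Fin.prod_prod_Ioi_castSucc fun j k => (1 - t ^ 2 * z j * z k) * (1 - (z j)⁻¹ * z k),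
    Fin.prod_univ_castSucc fun j => w j * (1 - s * z j),
    Fin.prod_univ_castSucc fun j => 1 - t ^ 2 * z j ^ 2, div_mul_div_comm]
  congr 1 <;> ring

theorem izerginKorepin_cross_factor {t a b : K} (ht : t ≠ 0) (ha : a ≠ 0) (hb : b ≠ 0) :
    (1 + t * a * b) * (1 + t * a⁻¹ * b) *
        ((1 + -(t * b)⁻¹ * (t * a)) * (1 + -(t * b)⁻¹ * (t * a)⁻¹)) =
      (1 - t ^ 2 * a * b) * (1 - a⁻¹ * b) * ((1 + (t * b * a)⁻¹) * (1 + a * (t * b)⁻¹)) := by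
  field_simp
  ring

theorem izerginKorepin_diagonal_factor (m : ℕ) {t s b w : K} (ht : t ≠ 0) (hs : s ^ 2 = -t)
    (hb : b ≠ 0) (hb1 : t ^ 2 * b ^ 2 ≠ 1) :
    t ^ (m + 1) * (w * (1 - s * b)) / (-(1 - t ^ 2 * b ^ 2)) *
        ((t * b - s) * (1 + -(t * b)⁻¹ * (t * b)⁻¹)) =
      -(s * w) * (1 + (t * b * b)⁻¹) * t ^ m := by
  have hden : 1 - t ^ 2 * b ^ 2 ≠ 0 := sub_ne_zero.mpr hb1.symm
  rw [div_mul_eq_mul_div, div_eq_iff (neg_ne_zero.mpr hden)]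
  field_simp
  rw [show t = -s ^ 2 by linear_combination hs]
  ring

theorem izerginKorepin_last_factor (m : ℕ) {n : ℕ} {t s b w : K} {a : Fin n → K} (ht : t ≠ 0)
    (hs : s ^ 2 = -t) (hb : b ≠ 0) (hb1 : t ^ 2 * b ^ 2 ≠ 1) (ha : ∀ j, a j ≠ 0)
    (hab : ∀ j, t ^ 2 * a j * b ≠ 1) (hab' : ∀ j, a j ≠ b) :
    (t ^ (m + 1) * (w * (1 - s * b)) *
          ∏ j, (1 + t * a j * b) * (1 + t * (a j)⁻¹ * b)) /
        (-(1 - t ^ 2 * b ^ 2) * ∏ j, (1 - t ^ 2 * a j * b) * (1 - (a j)⁻¹ * b)) *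
        ((t * b - s) * (1 + -(t * b)⁻¹ * (t * b)⁻¹)) *
        ∏ j, (1 + -(t * b)⁻¹ * (t * a j)) * (1 + -(t * b)⁻¹ * (t * a j)⁻¹) =
      -(s * w) * ((∏ j, (1 + (t * b * a j)⁻¹)) * (1 + (t * b * b)⁻¹)) *
        (∏ j, (1 + a j * (t * b)⁻¹)) * t ^ m := by
  have hQ : ∏ j, (1 - t ^ 2 * a j * b) * (1 - (a j)⁻¹ * b) ≠ 0 :=
    prod_ne_zero_iff.mpr fun j _ => mul_ne_zero (sub_ne_zero.mpr (hab j).symm)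
      (sub_ne_zero.mpr fun h => hab' j ((inv_mul_eq_one₀ (ha j)).mp h.symm))
  have hcross : (∏ j, (1 + t * a j * b) * (1 + t * (a j)⁻¹ * b)) *
        ∏ j, (1 + -(t * b)⁻¹ * (t * a j)) * (1 + -(t * b)⁻¹ * (t * a j)⁻¹) =
      (∏ j, (1 - t ^ 2 * a j * b) * (1 - (a j)⁻¹ * b)) *
        ((∏ j, (1 + (t * b * a j)⁻¹)) * ∏ j, (1 + a j * (t * b)⁻¹)) := by
    simp only [← prod_mul_distrib]
    exact prod_congr rfl fun j _ => izerginKorepin_cross_factor ht (ha j) hb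
  calc _ = t ^ (m + 1) * (w * (1 - s * b)) / (-(1 - t ^ 2 * b ^ 2)) *
          ((t * b - s) * (1 + -(t * b)⁻¹ * (t * b)⁻¹)) *
          ((∏ j, (1 + t * a j * b) * (1 + t * (a j)⁻¹ * b)) *
              (∏ j, (1 + -(t * b)⁻¹ * (t * a j)) * (1 + -(t * b)⁻¹ * (t * a j)⁻¹)) /
            ∏ j, (1 - t ^ 2 * a j * b) * (1 - (a j)⁻¹ * b)) := by
        rw [mul_div_mul_comm]
        ring
    _ = _ := by
        rw [hcross, mul_div_cancel_left₀ _ hQ, izerginKorepin_diagonal_factor m ht hs hb hb1]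
        ring

end

theorem FIIbar_eq_dualPrefactor_mul_det (M : ℕ) (t s : ℂ) (α γ : ℕ → ℂ) {N : ℕ}
    (x : Fin N → ℕ) (z w : Fin N → ℂ) :
    FIIbar M t s α γ x z w = dualPrefactor M t s z w * (dualMatrix M t s α γ x z).det := by
  rw [FIIbar, dualPrefactor, dualMatrix, Matrix.det_of_sum_eq_sum_perm_sum_pi]
  congr 1
  refine sum_congr rfl fun σ _ => sum_congr rfl fun τ _ => ?_
  have hsign : (-1 : ℂ) ^ (univ.filter fun j => τ j = false).card =
      ∏ j, if τ (σ j) then 1 else -1 := by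
    rw [Equiv.prod_comp σ (fun i => if τ i then (1 : ℂ) else -1), prod_ite]
    simp
  rw [hsign, mul_assoc, mul_assoc, ← prod_mul_distrib, ← prod_mul_distrib]
  congr 1
  refine prod_congr rfl fun j _ => ?_
  cases τ (σ j) <;> simp [signPow, rowWeight]

theorem FIIbar_IzerginKorepin_recursion_general (m n : ℕ) (hmn : n ≤ m) (t : ℂ) (ht : t ≠ 0)
    (s : ℂ) (hs : s ^ 2 = -t) (α γ : ℕ → ℂ)
    (x : Fin (n + 1) → ℕ) (hx : StrictMono x)
    (hxM : x (Fin.last n) = m + 1)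
    (z w : Fin (n + 1) → ℂ) (hz0 : ∀ j, z j ≠ 0)
    (hz1 : ∀ j, t ^ 2 * z j ^ 2 ≠ 1)
    (hzz : ∀ j k, j < k → t ^ 2 * z j * z k ≠ 1) (hzne : ∀ j k, j < k → z j ≠ z k) :
    FIIbar (m + 1) t s α (Function.update γ (m + 1) (-(t * z (Fin.last n))⁻¹)) x z w
      = -(s * w (Fin.last n)) *
        (∏ j, (1 + (t * z (Fin.last n) * z j)⁻¹)) *
        (∏ j : Fin n, (1 + z j.castSucc * (t * z (Fin.last n))⁻¹)) *
        (∏ j ∈ Finset.Icc 1 m, (t * (1 - α j * γ j) * z (Fin.last n) - α j)) *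
        (∏ j ∈ Finset.Icc 1 m, (t + γ j * (z (Fin.last n))⁻¹)) *
        FIIbar m t s α γ (fun j : Fin n => x j.castSucc) (fun j : Fin n => z j.castSucc)
          (fun j : Fin n => w j.castSucc) := by
  have hc : 1 + -(t * z (Fin.last n))⁻¹ * (t * z (Fin.last n)) = 0 := by
    rw [neg_mul, inv_mul_cancel₀ (mul_ne_zero ht (hz0 _)), add_neg_cancel]
  have hxm : ∀ j : Fin n, x j.castSucc ≤ m := fun j => by
    have := hx (Fin.castSucc_lt_last j)
    omega
  have hα : ∏ j ∈ Icc 1 m, (t * (1 - α j * γ j) * z (Fin.last n) - α j) =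
      ∏ j ∈ Icc 1 m, (-α j + (1 - α j * γ j) * (t * z (Fin.last n))) :=
    prod_congr rfl fun _ _ => by ring
  have hγ : ∏ j ∈ Icc 1 m, (t + γ j * (z (Fin.last n))⁻¹) =
      t ^ m * ∏ j ∈ Icc 1 m, (1 + γ j * (t * z (Fin.last n))⁻¹) := by
    have hfactor : ∀ k, t + γ k * (z (Fin.last n))⁻¹ = t * (1 + γ k * (t * z (Fin.last n))⁻¹) :=
      fun k => by field_simp
    simp_rw [hfactor]
    rw [prod_mul_distrib, prod_const, Nat.card_Icc, Nat.add_sub_cancel]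
  have hlast := izerginKorepin_last_factor m (w := w (Fin.last n)) (a := fun j => z j.castSucc)
    ht hs (hz0 _) (hz1 _) (fun _ => hz0 _) (fun j => hzz _ _ (Fin.castSucc_lt_last j))
    (fun j => hzne _ _ (Fin.castSucc_lt_last j))
  rw [FIIbar_eq_dualPrefactor_mul_det, FIIbar_eq_dualPrefactor_mul_det,
    det_dualMatrix_succ_update t s α γ x z _ hc hxm hxM, dualPrefactor_succ hmn, hα, hγ,
    Fin.prod_univ_castSucc fun j => 1 + (t * z (Fin.last n) * z j)⁻¹]
  linear_combination
    (dualPrefactor m t s (fun j => z j.castSucc) (fun j => w j.castSucc) *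
      (∏ k ∈ Icc 1 m, (-α k + (1 - α k * γ k) * (t * z (Fin.last n)))) *
      (∏ k ∈ Icc 1 m, (1 + γ k * (t * z (Fin.last n))⁻¹)) *
      (dualMatrix m t s α γ (fun j => x j.castSucc) (fun j => z j.castSucc)).det) * hlast

/-- Izergin–Korepin recursion for the type II dual wavefunctions,
equation (92) / Proposition 6.4 Property (3): the specialization `γ_M = −(t z_N)⁻¹`
of `F̄^{II}_{M,N}` factorizes through `F̄^{II}_{M-1,N-1}`.  Here `M = m+1`, `N = n+1`, so
`F̄^{II}_{M-1,N-1}` is `FIIbar m` on the first `n` variables/positions (interpreted as `1`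
when `n = 0`, with the same `w_j`). -/
theorem FIIbar_IzerginKorepin_recursion (m n : ℕ) (hmn : n ≤ m) (t : ℂ) (ht : t ≠ 0)
    (s : ℂ) (hs : s ^ 2 = -t) (α γ : ℕ → ℂ)
    (x : Fin (n + 1) → ℕ) (hx : StrictMono x) (hx1 : ∀ j, 1 ≤ x j)
    (hxM : x (Fin.last n) = m + 1)
    (z w : Fin (n + 1) → ℂ) (hz0 : ∀ j, z j ≠ 0)
    (hz1 : ∀ j, t ^ 2 * z j ^ 2 ≠ 1)
    (hzz : ∀ j k, j < k → t ^ 2 * z j * z k ≠ 1) (hzne : ∀ j k, j < k → z j ≠ z k)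
    (hw : ∀ j, w j ^ 2 = z j) :
    FIIbar (m + 1) t s α (Function.update γ (m + 1) (-(t * z (Fin.last n))⁻¹)) x z w
      = -(s * w (Fin.last n)) *
        (∏ j, (1 + (t * z (Fin.last n) * z j)⁻¹)) *
        (∏ j : Fin n, (1 + z j.castSucc * (t * z (Fin.last n))⁻¹)) *
        (∏ j ∈ Finset.Icc 1 m, (t * (1 - α j * γ j) * z (Fin.last n) - α j)) *
        (∏ j ∈ Finset.Icc 1 m, (t + γ j * (z (Fin.last n))⁻¹)) *
        FIIbar m t s α γ (fun j : Fin n => x j.castSucc) (fun j : Fin n => z j.castSucc)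
          (fun j : Fin n => w j.castSucc) :=
  FIIbar_IzerginKorepin_recursion_general m n hmn t ht s hs α γ x hx hxM z w hz0 hz1 hzz hzne
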